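/- Let ε₁, ε₂ ∈ [0,1], τ₁, τ₂ > 0, and Q₁, Q₂ : S × A → ℝ, and for i = 1, 2 let πᵢ be the εᵢ-softmax policy of Qᵢ with temperature τᵢ. Then max_{s ∈ S} Σ_{a ∈ A} |π₁(a|s) − π₂(a|s)| ≤ 2 |ε₁ − ε₂| + (1/τ₁) ‖Q₁ − Q₂‖∞ + (|τ₁ − τ₂|/(τ₁ τ₂)) ‖Q₂‖∞. -/

import Mathlib

/-!
Write each policy as `ε / |A| + (1 - ε) • p` with `p` a softmax distribution. The uniform parts
and the change of weight cost at most `2 |ε₁ - ε₂|` in `ℓ¹`, leaving the `ℓ¹` distance of two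
softmax distributions `p, q` whose logits `Q₁ / τ₁`, `Q₂ / τ₂` differ pointwise by at most
`δ = ‖Q₁ - Q₂‖∞ / τ₁ + |τ₁ - τ₂| ‖Q₂‖∞ / (τ₁ τ₂)`. That distance is `2 (p B - q B)` for
`B = {p ≥ q}`. Writing `p B = U / (U + V)` with `U, V` the sums of `exp` of the logits over `B`
and its complement, a shift of the logits by at most `δ` scales `U` and `V` by factors in
`[e^{-δ}, e^δ]`, whence `p B - q B ≤ tanh (δ / 2) ≤ δ / 2`.
-/

section

variable {S A : Type*} [Fintype S] [Fintype A] [Nonempty S] [Nonempty A]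

noncomputable def supNorm (Q : S × A → ℝ) : ℝ :=
  Finset.univ.sup' Finset.univ_nonempty fun y => |Q y|

noncomputable def softmaxPolicy (Q : S × A → ℝ) (ε τ : ℝ) : S → A → ℝ :=
  fun s a => ε / (Fintype.card A : ℝ) +
    (1 - ε) * Real.exp (Q (s, a) / τ) / ∑ a', Real.exp (Q (s, a') / τ)

open Real Finset

lemma div_add_sub_div_add_le {u v u' v' c : ℝ} (hu : 0 ≤ u) (hv' : 0 ≤ v') (hc : 1 ≤ c)
    (huu' : u ≤ c * u') (hv'v : v' ≤ c * v) (huv : 0 < u + v) (huv' : 0 < u' + v') :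
    u / (u + v) - u' / (u' + v') ≤ (c - 1) / (c + 1) := by
  rw [div_sub_div _ _ huv.ne' huv'.ne', div_le_div_iff₀ (mul_pos huv huv') (by linarith)]
  set α := c * u' - u
  set β := c * v - v'
  have hα : 0 ≤ α := sub_nonneg.2 huu'
  have hβ : 0 ≤ β := sub_nonneg.2 hv'v
  -- `c` times the gap is a sum of nonnegative terms once `c u' = u + α`, `c v = v' + β`
  have key : c * ((c - 1) * (u * u' + v * v') - 2 * u * v' + 2 * c * u' * v) =
      (c - 1) * (u - v') ^ 2 + (c - 1) * (u * α + v' * β) + 2 * (u * β + α * v' + α * β) := by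
    simp only [α, β]; ring
  have hgap : 0 ≤ (c - 1) * (u * u' + v * v') - 2 * u * v' + 2 * c * u' * v := by
    refine nonneg_of_mul_nonneg_right (a := c) ?_ (by linarith)
    rw [key]; have := sub_nonneg.2 hc; positivity
  linarith

-- `tanh (δ / 2) ≤ δ / 2`, with `tanh (δ / 2) = (exp δ - 1) / (exp δ + 1)` cleared of denominators
lemma two_mul_exp_sub_one_le {δ : ℝ} (hδ : 0 ≤ δ) : 2 * (exp δ - 1) ≤ δ * (exp δ + 1) := by
  have hmono : Monotone fun t => (t - 2) * exp t + t + 2 := by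
    refine monotone_of_hasDerivAt_nonneg (f' := fun t => (t - 1) * exp t + 1) (fun t => ?_)
      (fun t => ?_)
    · exact ((((hasDerivAt_id' t).sub_const 2).fun_mul (hasDerivAt_exp t)).fun_add
        (hasDerivAt_id' t)).add_const 2 |>.congr_deriv (by ring)
    · have h : (1 - t) * exp t ≤ exp (-t) * exp t := by
        gcongr; linarith [add_one_le_exp (-t)]
      rw [← exp_add, neg_add_cancel, exp_zero] at h
      show 0 ≤ (t - 1) * exp t + 1
      linarith
  have := hmono hδ
  simp only [zero_sub, exp_zero] at this
  linarith

lemma sum_abs_sub_eq_two_mul_sum_filter {ι : Type*} (s : Finset ι) {p q : ι → ℝ}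
    (hpq : ∑ i ∈ s, p i = ∑ i ∈ s, q i) :
    ∑ i ∈ s, |p i - q i| = 2 * ∑ i ∈ s with q i ≤ p i, (p i - q i) := by
  have habs : ∀ t : ℝ, |t| = 2 * max t 0 - t := fun t => by
    rcases le_total 0 t with h | h
    · rw [abs_of_nonneg h, max_eq_left h]; ring
    · rw [abs_of_nonpos h, max_eq_right h]; ring
  simp_rw [habs]
  rw [sum_sub_distrib, ← mul_sum, sum_sub_distrib, hpq, sub_self, sub_zero, sum_filter]
  congr 1
  refine sum_congr rfl fun i _ => ?_
  split_ifs with h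
  · exact max_eq_left (sub_nonneg.2 h)
  · exact max_eq_right (by linarith [not_le.1 h])

lemma sum_exp_le_exp_mul_sum_exp {ι : Type*} {x y : ι → ℝ} {δ : ℝ} (h : ∀ i, x i ≤ δ + y i)
    (s : Finset ι) : ∑ i ∈ s, exp (x i) ≤ exp δ * ∑ i ∈ s, exp (y i) := by
  rw [mul_sum]
  exact sum_le_sum fun i _ => by rw [← exp_add]; exact exp_le_exp.2 (h i)

section Softmax

variable {ι : Type*} [Fintype ι]

noncomputable def softmax (x : ι → ℝ) (i : ι) : ℝ :=
  exp (x i) / ∑ j, exp (x j)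

lemma softmax_nonneg (x : ι → ℝ) (i : ι) : 0 ≤ softmax x i := by
  unfold softmax; positivity

lemma sum_softmax_eq_div [DecidableEq ι] (x : ι → ℝ) (s : Finset ι) :
    ∑ i ∈ s, softmax x i =
      (∑ i ∈ s, exp (x i)) / ((∑ i ∈ s, exp (x i)) + ∑ i ∈ sᶜ, exp (x i)) := by
  rw [sum_add_sum_compl, sum_div]
  rfl

variable [Nonempty ι]

lemma sum_exp_pos (x : ι → ℝ) : 0 < ∑ i, exp (x i) :=
  sum_pos (fun i _ => exp_pos (x i)) univ_nonempty

lemma sum_softmax (x : ι → ℝ) : ∑ i, softmax x i = 1 := by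
  simp only [softmax, ← sum_div, div_self (sum_exp_pos x).ne']

lemma sum_softmax_sub_sum_softmax_le {x y : ι → ℝ} {δ : ℝ} (h : ∀ i, |x i - y i| ≤ δ)
    (s : Finset ι) :
    ∑ i ∈ s, softmax x i - ∑ i ∈ s, softmax y i ≤ (exp δ - 1) / (exp δ + 1) := by
  classical
  have hδ : 0 ≤ δ := (abs_nonneg _).trans (h (Classical.arbitrary ι))
  rw [sum_softmax_eq_div, sum_softmax_eq_div]
  refine div_add_sub_div_add_le (by positivity) (by positivity) (one_le_exp hδ)
    (sum_exp_le_exp_mul_sum_exp (fun i => by linarith [(abs_le.1 (h i)).2]) s)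
    (sum_exp_le_exp_mul_sum_exp (fun i => by linarith [(abs_le.1 (h i)).1]) sᶜ) ?_ ?_
  · rw [sum_add_sum_compl]; exact sum_exp_pos x
  · rw [sum_add_sum_compl]; exact sum_exp_pos y

lemma sum_abs_softmax_sub_le {x y : ι → ℝ} {δ : ℝ} (h : ∀ i, |x i - y i| ≤ δ) :
    ∑ i, |softmax x i - softmax y i| ≤ δ := by
  have hδ : 0 ≤ δ := (abs_nonneg _).trans (h (Classical.arbitrary ι))
  have htanh : (exp δ - 1) / (exp δ + 1) ≤ δ / 2 := by
    rw [div_le_div_iff₀ (by positivity) two_pos]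
    linarith [two_mul_exp_sub_one_le hδ]
  rw [sum_abs_sub_eq_two_mul_sum_filter _ (by rw [sum_softmax, sum_softmax]), sum_sub_distrib]
  linarith [sum_softmax_sub_sum_softmax_le h {i | softmax y i ≤ softmax x i}]

lemma sum_abs_mix_sub_le {p q : ι → ℝ} (hq : ∀ i, 0 ≤ q i) (hq1 : ∑ i, q i = 1) {ε₁ ε₂ : ℝ}
    (hε₁0 : 0 ≤ ε₁) (hε₁1 : ε₁ ≤ 1) :
    ∑ i, |(ε₁ / Fintype.card ι + (1 - ε₁) * p i) - (ε₂ / Fintype.card ι + (1 - ε₂) * q i)| ≤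
      2 * |ε₁ - ε₂| + ∑ i, |p i - q i| := by
  have hcard : (Fintype.card ι : ℝ) ≠ 0 := Nat.cast_ne_zero.2 Fintype.card_ne_zero
  have hpoint (i : ι) :
      |(ε₁ / Fintype.card ι + (1 - ε₁) * p i) - (ε₂ / Fintype.card ι + (1 - ε₂) * q i)| ≤
        |ε₁ - ε₂| / Fintype.card ι + (1 - ε₁) * |p i - q i| + |ε₁ - ε₂| * q i :=
    calc _ = |(ε₁ - ε₂) / Fintype.card ι + (1 - ε₁) * (p i - q i) + (ε₂ - ε₁) * q i| := by
          ring_nf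
      _ ≤ _ := by
        refine (abs_add_three _ _ _).trans_eq ?_
        rw [abs_div, Nat.abs_cast, abs_mul, abs_mul, abs_of_nonneg (sub_nonneg.2 hε₁1),
          abs_of_nonneg (hq i), abs_sub_comm ε₂]
  calc _ ≤ ∑ i, (|ε₁ - ε₂| / Fintype.card ι + (1 - ε₁) * |p i - q i| + |ε₁ - ε₂| * q i) :=
        sum_le_sum fun i _ => hpoint i
    _ = |ε₁ - ε₂| + (1 - ε₁) * ∑ i, |p i - q i| + |ε₁ - ε₂| := by
        rw [sum_add_distrib, sum_add_distrib, ← mul_sum, ← mul_sum, hq1, sum_const, card_univ,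
          nsmul_eq_mul, mul_div_cancel₀ _ hcard, mul_one]
    _ ≤ _ := by
        nlinarith [sum_nonneg fun i (_ : i ∈ univ) => abs_nonneg (p i - q i)]

end Softmax

lemma abs_div_sub_div_le (a b : ℝ) {τ₁ τ₂ : ℝ} (hτ₁ : 0 < τ₁) (hτ₂ : 0 < τ₂) :
    |a / τ₁ - b / τ₂| ≤ 1 / τ₁ * |a - b| + |τ₁ - τ₂| / (τ₁ * τ₂) * |b| := by
  have hsplit : a / τ₁ - b / τ₂ = 1 / τ₁ * (a - b) + (τ₂ - τ₁) / (τ₁ * τ₂) * b := by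
    field_simp; ring
  rw [hsplit]
  refine (abs_add_le _ _).trans_eq ?_
  rw [abs_mul, abs_mul, abs_div, abs_div, abs_one, abs_of_pos hτ₁, abs_of_pos (mul_pos hτ₁ hτ₂),
    abs_sub_comm τ₂]

lemma abs_le_supNorm (Q : S × A → ℝ) (z : S × A) : |Q z| ≤ supNorm Q :=
  le_sup' (fun y => |Q y|) (mem_univ z)

omit [Fintype S] [Nonempty S] [Nonempty A] in
lemma softmaxPolicy_apply (Q : S × A → ℝ) (ε τ : ℝ) (s : S) (a : A) :
    softmaxPolicy Q ε τ s a =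
      ε / Fintype.card A + (1 - ε) * softmax (fun b => Q (s, b) / τ) a := by
  simp only [softmaxPolicy, softmax, mul_div_assoc]

theorem stmt_17_general
    (ε₁ ε₂ τ₁ τ₂ : ℝ)
    (hε₁0 : 0 ≤ ε₁) (hε₁1 : ε₁ ≤ 1)
    (hτ₁ : 0 < τ₁) (hτ₂ : 0 < τ₂)
    (Q₁ Q₂ : S × A → ℝ) :
    (Finset.univ.sup' Finset.univ_nonempty fun s : S =>
        ∑ a, |softmaxPolicy Q₁ ε₁ τ₁ s a - softmaxPolicy Q₂ ε₂ τ₂ s a|) ≤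
      2 * |ε₁ - ε₂| + 1 / τ₁ * supNorm (Q₁ - Q₂) +
        |τ₁ - τ₂| / (τ₁ * τ₂) * supNorm Q₂ := by
  refine sup'_le _ _ fun s _ => ?_
  have hlogits : ∀ a, |Q₁ (s, a) / τ₁ - Q₂ (s, a) / τ₂| ≤
      1 / τ₁ * supNorm (Q₁ - Q₂) + |τ₁ - τ₂| / (τ₁ * τ₂) * supNorm Q₂ := fun a =>
    (abs_div_sub_div_le _ _ hτ₁ hτ₂).trans <| by
      gcongr
      exacts [abs_le_supNorm (Q₁ - Q₂) (s, a), abs_le_supNorm Q₂ (s, a)]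
  simp only [softmaxPolicy_apply]
  calc _ ≤ 2 * |ε₁ - ε₂| + ∑ a, |softmax (fun b => Q₁ (s, b) / τ₁) a -
          softmax (fun b => Q₂ (s, b) / τ₂) a| :=
        sum_abs_mix_sub_le (softmax_nonneg _) (sum_softmax _) hε₁0 hε₁1
    _ ≤ _ := by linarith [sum_abs_softmax_sub_le hlogits]

/-- Lipschitz continuity of the ε-softmax policy in `(ε, τ, Q)`:
`max_s Σ_a |π₁(a|s) − π₂(a|s)| ≤ 2|ε₁−ε₂| + (1/τ₁)‖Q₁−Q₂‖∞ + (|τ₁−τ₂|/(τ₁τ₂))‖Q₂‖∞`. -/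
theorem stmt_17
    (ε₁ ε₂ τ₁ τ₂ : ℝ)
    (hε₁0 : 0 ≤ ε₁) (hε₁1 : ε₁ ≤ 1) (hε₂0 : 0 ≤ ε₂) (hε₂1 : ε₂ ≤ 1)
    (hτ₁ : 0 < τ₁) (hτ₂ : 0 < τ₂)
    (Q₁ Q₂ : S × A → ℝ) :
    (Finset.univ.sup' Finset.univ_nonempty fun s : S =>
        ∑ a, |softmaxPolicy Q₁ ε₁ τ₁ s a - softmaxPolicy Q₂ ε₂ τ₂ s a|) ≤
      2 * |ε₁ - ε₂| + 1 / τ₁ * supNorm (Q₁ - Q₂) +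
        |τ₁ - τ₂| / (τ₁ * τ₂) * supNorm Q₂ :=
  stmt_17_general ε₁ ε₂ τ₁ τ₂ hε₁0 hε₁1 hτ₁ hτ₂ Q₁ Q₂

end
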